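/- The conserved quantity E_l of the box-ball system is invariant under time evolution: E_l(T_k(b)) = E_l(b) for all l, k ≥ 1 and all states b with sufficiently many trailing empty boxes. -/
import Mathlib


/-- The type `A^{(1)}_1` combinatorial R-matrix on pairs:
`Rm (a,b) (c,d) = ((c',d'),(a',b'))`. -/
def Rm (x y : ℤ × ℤ) : (ℤ × ℤ) × (ℤ × ℤ) :=
  ((y.1 - min x.2 y.1 + min x.1 y.2, y.2 + min x.2 y.1 - min x.1 y.2),
   (x.1 + min x.2 y.1 - min x.1 y.2, x.2 - min x.2 y.1 + min x.1 y.2))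

/-- Membership in the crystal `B^{1,s}`. -/
def inB (s : ℤ) (x : ℤ × ℤ) : Prop := 0 ≤ x.1 ∧ 0 ≤ x.2 ∧ x.1 + x.2 = s

/-- Pass the carrier `u` through the state, applying the combinatorial R-matrix
at each box; returns the new state together with the final carrier. -/
def pass (u : ℤ × ℤ) : List (ℤ × ℤ) → List (ℤ × ℤ) × (ℤ × ℤ)
  | [] => ([], u)
  | x :: xs =>
      let r := Rm u x
      let p := pass r.2 xs
      (r.1 :: p.1, p.2)

/-- The box-ball time evolution `T_l`, using the carrier `u_l = (l,0)`. -/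
def Tl (l : ℤ) (b : List (ℤ × ℤ)) : List (ℤ × ℤ) := (pass (l, 0) b).1

/-- A ball. -/
def ball : ℤ × ℤ := (0, 1)

/-- An empty box. -/
def emptyBox : ℤ × ℤ := (1, 0)

/-- The energy `E_l(b) = Σ_i H(u_l^{(i-1)} ⊗ b_i)` where `H((a,b) ⊗ (c,d)) = min(a,d)`,
computed along the carrier pass with initial carrier `u`. -/
def energy (u : ℤ × ℤ) : List (ℤ × ℤ) → ℤ
  | [] => 0
  | x :: xs => min u.1 x.2 + energy (Rm u x).2 xs

/- ### Auxiliary lemmas -/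

lemma pass_nil (v : ℤ × ℤ) : pass v [] = ([], v) := rfl

lemma energy_nil (u : ℤ × ℤ) : energy u [] = 0 := rfl

lemma pass_cons (v x : ℤ × ℤ) (xs : List (ℤ × ℤ)) :
    pass v (x :: xs) = ((Rm v x).1 :: (pass (Rm v x).2 xs).1, (pass (Rm v x).2 xs).2) := rfl

lemma energy_cons (u x : ℤ × ℤ) (xs : List (ℤ × ℤ)) :
    energy u (x :: xs) = min u.1 x.2 + energy (Rm u x).2 xs := rfl

/-- Basic properties of one R-matrix step with a box in `B^{1,1}`. -/
lemma Rm_step {u x : ℤ × ℤ} (hu : 0 ≤ u.1 ∧ 0 ≤ u.2) (hx : inB 1 x) :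
    inB 1 (Rm u x).1 ∧ (0 ≤ (Rm u x).2.1 ∧ 0 ≤ (Rm u x).2.2) ∧
      (Rm u x).2.1 + (Rm u x).2.2 = u.1 + u.2 ∧ (Rm u x).2.2 ≤ u.2 + 1 := by
  obtain ⟨h1, h2, h3⟩ := hx
  simp only [Rm, inB]
  omega

set_option maxHeartbeats 2000000 in
/-- The local exchange relation (a consequence of the Yang–Baxter equation):
the carrier part commutes, and the energies satisfy a telescoping relation. -/
lemma local_rel {u v x : ℤ × ℤ} (hu : 0 ≤ u.1 ∧ 0 ≤ u.2) (hv : 0 ≤ v.1 ∧ 0 ≤ v.2)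
    (hx : inB 1 x) :
    (Rm (Rm u (Rm v x).1).2 (Rm v x).2).2 = (Rm (Rm u v).2 x).2 ∧
      min u.1 (Rm v x).1.2 + min (Rm u (Rm v x).1).2.1 (Rm v x).2.2
        = min (Rm u v).2.1 x.2 + min u.1 v.2 := by
  obtain ⟨h1, h2, h3⟩ := hx
  obtain ⟨u1, u2⟩ := u
  obtain ⟨v1, v2⟩ := v
  obtain ⟨x1, x2⟩ := x
  simp only [Rm, Prod.mk.injEq] at *
  refine ⟨⟨?_, ?_⟩, ?_⟩ <;> omega

/-- All boxes produced by a pass are again in `B^{1,1}`. -/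
lemma pass_mem : ∀ (b : List (ℤ × ℤ)) (v : ℤ × ℤ), (0 ≤ v.1 ∧ 0 ≤ v.2) →
    (∀ x ∈ b, inB 1 x) → ∀ y ∈ (pass v b).1, inB 1 y := by
  intro b
  induction b with
  | nil => intro v _ _ y hy; rw [pass_nil] at hy; simp at hy
  | cons x xs ih =>
    intro v hv hb y hy
    rw [pass_cons] at hy
    have hx := hb x (by simp)
    rcases List.mem_cons.1 hy with h | h
    · exact h ▸ (Rm_step hv hx).1
    · exact ih (Rm v x).2 (Rm_step hv hx).2.1 (fun z hz => hb z (by simp [hz])) y h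

/-- The final carrier of a pass: nonnegativity, conservation of its total,
and a bound on its ball content. -/
lemma pass_carrier : ∀ (b : List (ℤ × ℤ)) (v : ℤ × ℤ), (0 ≤ v.1 ∧ 0 ≤ v.2) →
    (∀ x ∈ b, inB 1 x) →
    (0 ≤ (pass v b).2.1 ∧ 0 ≤ (pass v b).2.2) ∧
      (pass v b).2.1 + (pass v b).2.2 = v.1 + v.2 ∧
      (pass v b).2.2 ≤ v.2 + b.length := by
  intro b
  induction b with
  | nil =>
    intro v hv _
    rw [pass_nil]
    exact ⟨hv, rfl, by simpa using hv.2⟩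
  | cons x xs ih =>
    intro v hv hb
    have hx := hb x (by simp)
    have hs := Rm_step hv hx
    have := ih (Rm v x).2 hs.2.1 (fun z hz => hb z (by simp [hz]))
    rw [pass_cons]
    refine ⟨this.1, ?_, ?_⟩
    · rw [this.2.1]; exact hs.2.2.1
    · have := this.2.2
      have := hs.2.2.2
      simp only [List.length_cons]
      omega

lemma pass_append : ∀ (b c : List (ℤ × ℤ)) (v : ℤ × ℤ),
    pass v (b ++ c) = ((pass v b).1 ++ (pass (pass v b).2 c).1, (pass (pass v b).2 c).2) := by
  intro b
  induction b with
  | nil => intro c v; rw [pass_nil]; simp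
  | cons x xs ih => intro c v; simp only [List.cons_append, pass_cons, ih, List.cons_append]

/-- Passing through enough empty boxes empties the carrier. -/
lemma pass_empty : ∀ (n : ℕ) (v : ℤ × ℤ), 0 ≤ v.1 → 0 ≤ v.2 → v.2 ≤ n →
    (pass v (List.replicate n emptyBox)).2 = (v.1 + v.2, 0) := by
  intro n
  induction n with
  | zero =>
    intro v h1 h2 h3
    have hv2 : v.2 = 0 := by exact_mod_cast le_antisymm h3 h2
    rw [List.replicate_zero, pass_nil, Prod.ext_iff, hv2]
    simp
  | succ m ih =>
    intro v h1 h2 h3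
    rw [List.replicate_succ, pass_cons,
      ih (Rm v emptyBox).2 (by simp only [Rm, emptyBox]; omega)
        (by simp only [Rm, emptyBox]; omega)
        (by simp only [Rm, emptyBox]; push_cast at h3 ⊢; omega)]
    rw [Prod.ext_iff]
    simp only [Rm, emptyBox]
    constructor
    · show _ = v.1 + v.2
      omega
    · trivial

/-- Key telescoping identity: the energy of the evolved state differs from
the energy of the state by the boundary terms of the two carriers. -/
lemma key : ∀ (b : List (ℤ × ℤ)) (u v : ℤ × ℤ), (0 ≤ u.1 ∧ 0 ≤ u.2) →
    (0 ≤ v.1 ∧ 0 ≤ v.2) → (∀ x ∈ b, inB 1 x) →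
    energy u (pass v b).1 + min (pass u (pass v b).1).2.1 (pass v b).2.2
      = energy (Rm u v).2 b + min u.1 v.2 := by
  intro b
  induction b with
  | nil =>
    intro u v _ _ _
    simp [pass_nil, energy_nil]
  | cons x xs ih =>
    intro u v hu hv hb
    have hx := hb x (by simp)
    have hxs : ∀ y ∈ xs, inB 1 y := fun y hy => hb y (by simp [hy])
    have hx1 : inB 1 (Rm v x).1 := (Rm_step hv hx).1
    have hv1 : 0 ≤ (Rm v x).2.1 ∧ 0 ≤ (Rm v x).2.2 := (Rm_step hv hx).2.1
    have hu1 : 0 ≤ (Rm u (Rm v x).1).2.1 ∧ 0 ≤ (Rm u (Rm v x).1).2.2 :=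
      (Rm_step hu hx1).2.1
    have IH := ih (Rm u (Rm v x).1).2 (Rm v x).2 hu1 hv1 hxs
    have L := local_rel hu hv hx
    simp only [pass_cons, energy_cons]
    rw [L.1] at IH
    omega

/-- The conserved quantities: `E_l(T_k(b)) = E_l(b)` for states with sufficiently
many trailing empty boxes. -/
theorem energy_conserved (l k : ℤ) (hl : 1 ≤ l) (hk : 1 ≤ k)
    (b : List (ℤ × ℤ)) (hb : ∀ x ∈ b, inB 1 x) :
    ∃ N : ℕ, ∀ n : ℕ, N ≤ n →
      energy (l, 0) (Tl k (b ++ List.replicate n emptyBox)) =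
        energy (l, 0) (b ++ List.replicate n emptyBox) := by
  refine ⟨b.length, fun n hn => ?_⟩
  set bb := b ++ List.replicate n emptyBox with hbbdef
  have hbb : ∀ x ∈ bb, inB 1 x := by
    intro x hx
    rcases List.mem_append.1 hx with h | h
    · exact hb x h
    · have := List.eq_of_mem_replicate h
      subst this
      exact ⟨by norm_num [emptyBox], by norm_num [emptyBox], by norm_num [emptyBox]⟩
  have hk0 : (0 : ℤ) ≤ k ∧ (0 : ℤ) ≤ 0 := ⟨by omega, le_refl 0⟩
  have hl0 : (0 : ℤ) ≤ l ∧ (0 : ℤ) ≤ 0 := ⟨by omega, le_refl 0⟩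
  -- the k-carrier is empty at the end of the pass
  have hcar := pass_carrier b (k, 0) hk0 hb
  have hvf : (pass (k, 0) bb).2 = (k, 0) := by
    rw [hbbdef, pass_append,
      pass_empty n (pass (k, 0) b).2 hcar.1.1 hcar.1.2
        (by have := hcar.2.2; simp at this ⊢; omega)]
    have := hcar.2.1
    simp at this ⊢
    omega
  have hK := key bb (l, 0) (k, 0) hl0 hk0 hbb
  -- simplify the boundary terms
  have hmem : ∀ y ∈ (pass (k, 0) bb).1, inB 1 y := pass_mem bb (k, 0) hk0 hbb
  have huf : 0 ≤ (pass (l, 0) (pass (k, 0) bb).1).2.1 :=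
    (pass_carrier (pass (k, 0) bb).1 (l, 0) hl0 hmem).1.1
  rw [hvf] at hK
  have hRm : (Rm (l, 0) (k, 0)).2 = (l, 0) := by
    simp only [Rm, Prod.mk.injEq]
    omega
  rw [hRm] at hK
  have h1 : min (pass (l, 0) (pass (k, 0) bb).1).2.1 (k, 0).2 = 0 := by
    simp; omega
  have h2 : min (l, 0).1 (k, 0).2 = 0 := by simp; omega
  rw [h1, h2] at hK
  show energy (l, 0) (pass (k, 0) bb).1 = energy (l, 0) bb
  omega
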